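/- Let Γ be a finitely generated nilpotent group. Then every element of the commutator subgroup [Γ, Γ] is distorted: for every finite symmetric generating set S of Γ and every γ ∈ [Γ, Γ], lim_{n→∞} ℓ_S(γ^n)/n = 0. -/

import Mathlib

open Filter Topology

/-- The word length of `γ` with respect to the generating set `S` (assumed symmetric). -/
noncomputable def wordLength {Γ : Type} [Group Γ] (S : Finset Γ) (γ : Γ) : ℕ :=
  sInf {n : ℕ | ∃ l : List Γ, l.length = n ∧ (∀ x ∈ l, x ∈ S) ∧ l.prod = γ}

/-!
Since `n ↦ ℓ_S(γⁿ)` is subadditive, Fekete's lemma makes `ℓ_S(γⁿ)/n` converge to the stable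
length `τ(γ) = infₙ ℓ_S(γⁿ)/n`, so it suffices to show `τ(γ) = 0`.

If `c = ⁅x, y⁆` is central then `c^(k²) = ⁅xᵏ, yᵏ⁆` has word length `O(k)`, so `τ(c) = 0`. As `τ`
is subadditive on commuting elements, it vanishes on every central subgroup generated by
commutators, in particular on the last nontrivial term `Z` of the lower central series. Writing
`γᵐ = w z` with `z ∈ Z` and `w` a lift of a shortest word for the image of `γᵐ` in `Γ ⧸ Z` gives
`τ(γ) ≤ τ(γ Z)`, and induction on the nilpotency class concludes.
-/

open Subgroup
open scoped commutatorElement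

variable {Γ : Type} [Group Γ] {S : Finset Γ}

theorem submonoidClosure_eq_top_of_inv_mem {S : Set Γ} (hsym : ∀ s ∈ S, s⁻¹ ∈ S)
    (hgen : Subgroup.closure S = ⊤) : Submonoid.closure S = ⊤ := by
  rw [← Subgroup.top_toSubmonoid, ← hgen, Subgroup.closure_toSubmonoid,
    Set.union_eq_left.mpr fun s hs => by simpa using hsym _ (Set.mem_inv.mp hs)]

section wordLength

theorem wordLength_list_prod_le {l : List Γ} (hl : ∀ x ∈ l, x ∈ S) :
    wordLength S l.prod ≤ l.length :=
  Nat.sInf_le ⟨l, rfl, hl, rfl⟩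

theorem wordLength_one : wordLength S (1 : Γ) = 0 :=
  Nat.le_zero.mp (wordLength_list_prod_le (l := []) (by simp))

variable (hS : Submonoid.closure (S : Set Γ) = ⊤)
include hS

theorem exists_list_prod_eq_length_eq_wordLength (g : Γ) :
    ∃ l : List Γ, (∀ x ∈ l, x ∈ S) ∧ l.prod = g ∧ l.length = wordLength S g := by
  obtain ⟨l, hl, rfl⟩ := Submonoid.exists_list_of_mem_closure (hS ▸ Submonoid.mem_top g)
  obtain ⟨l', hlen, hl', hprod⟩ :
      wordLength S l.prod ∈ {n | ∃ l' : List Γ, l'.length = n ∧ (∀ x ∈ l', x ∈ S) ∧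
        l'.prod = l.prod} :=
    Nat.sInf_mem ⟨l.length, l, rfl, hl, rfl⟩
  exact ⟨l', hl', hprod, hlen⟩

theorem wordLength_mul_le (a b : Γ) : wordLength S (a * b) ≤ wordLength S a + wordLength S b := by
  obtain ⟨la, hla, rfl, hlena⟩ := exists_list_prod_eq_length_eq_wordLength hS a
  obtain ⟨lb, hlb, rfl, hlenb⟩ := exists_list_prod_eq_length_eq_wordLength hS b
  rw [← hlena, ← hlenb, ← List.length_append, ← List.prod_append]
  exact wordLength_list_prod_le fun x hx => (List.mem_append.mp hx).elim (hla x) (hlb x)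

theorem wordLength_pow_le (a : Γ) (k : ℕ) : wordLength S (a ^ k) ≤ k * wordLength S a := by
  induction k with
  | zero => simp [wordLength_one]
  | succ k ih =>
    rw [pow_succ, add_one_mul]
    exact (wordLength_mul_le hS _ _).trans (Nat.add_le_add_right ih _)

theorem wordLength_inv_le (hsym : ∀ s ∈ S, s⁻¹ ∈ S) (a : Γ) :
    wordLength S a⁻¹ ≤ wordLength S a := by
  obtain ⟨l, hl, rfl, hlen⟩ := exists_list_prod_eq_length_eq_wordLength hS a
  rw [← hlen, List.prod_inv_reverse]
  refine (wordLength_list_prod_le fun x hx => ?_).trans (by simp)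
  obtain ⟨y, hy, rfl⟩ := List.mem_map.mp (List.mem_reverse.mp hx)
  exact hsym y (hl y hy)

theorem wordLength_commutatorElement_le (hsym : ∀ s ∈ S, s⁻¹ ∈ S) (x y : Γ) :
    wordLength S ⁅x, y⁆ ≤ 2 * (wordLength S x + wordLength S y) := by
  have := wordLength_mul_le hS (x * y * x⁻¹) y⁻¹
  have := wordLength_mul_le hS (x * y) x⁻¹
  have := wordLength_mul_le hS x y
  have := wordLength_inv_le hS hsym x
  have := wordLength_inv_le hS hsym y
  rw [commutatorElement_def]
  omega

end wordLength

section stableLength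

/-- `Subadditive.lim` of `n ↦ ℓ_S(γⁿ)`, spelled out so that it is defined for every `S`. -/
noncomputable def stableLength (S : Finset Γ) (γ : Γ) : ℝ :=
  sInf ((fun n : ℕ => (wordLength S (γ ^ n) : ℝ) / n) '' Set.Ici 1)

theorem bddBelow_range_wordLength_pow_div (γ : Γ) :
    BddBelow (Set.range fun n : ℕ => (wordLength S (γ ^ n) : ℝ) / n) :=
  ⟨0, by rintro _ ⟨n, rfl⟩; positivity⟩

theorem stableLength_le_div {γ : Γ} {n : ℕ} (hn : n ≠ 0) :
    stableLength S γ ≤ wordLength S (γ ^ n) / n :=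
  csInf_le ((bddBelow_range_wordLength_pow_div γ).mono (Set.image_subset_range _ _))
    ⟨n, Nat.one_le_iff_ne_zero.mpr hn, rfl⟩

theorem le_stableLength {γ : Γ} {c : ℝ} (h : ∀ n : ℕ, n ≠ 0 → c ≤ wordLength S (γ ^ n) / n) :
    c ≤ stableLength S γ :=
  le_csInf ⟨_, 1, Set.self_mem_Ici, rfl⟩ <| by
    rintro _ ⟨n, hn, rfl⟩
    exact h n (Nat.one_le_iff_ne_zero.mp hn)

theorem stableLength_nonneg (γ : Γ) : 0 ≤ stableLength S γ :=
  le_stableLength fun _ _ => by positivity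

theorem stableLength_le_wordLength (γ : Γ) : stableLength S γ ≤ wordLength S γ := by
  simpa using stableLength_le_div (S := S) (γ := γ) one_ne_zero

theorem stableLength_one : stableLength S (1 : Γ) = 0 :=
  le_antisymm (by simpa [wordLength_one] using stableLength_le_wordLength (S := S) 1)
    (stableLength_nonneg 1)

theorem mul_stableLength_le_stableLength_pow (γ : Γ) (m : ℕ) :
    m * stableLength S γ ≤ stableLength S (γ ^ m) := by
  rcases Nat.eq_zero_or_pos m with rfl | hm
  · simpa using stableLength_nonneg (S := S) 1
  refine le_stableLength fun n hn => ?_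
  have h := stableLength_le_div (S := S) (γ := γ) (mul_ne_zero hm.ne' hn)
  rw [pow_mul, Nat.cast_mul, le_div_iff₀ (by positivity)] at h
  rw [le_div_iff₀ (by positivity)]
  linarith

theorem tendsto_wordLength_pow_div_stableLength (hS : Submonoid.closure (S : Set Γ) = ⊤)
    (γ : Γ) :
    Tendsto (fun n : ℕ => (wordLength S (γ ^ n) : ℝ) / n) atTop (𝓝 (stableLength S γ)) := by
  have hsub : Subadditive fun n : ℕ => (wordLength S (γ ^ n) : ℝ) := fun m n => by
    simp only [pow_add]
    exact_mod_cast wordLength_mul_le hS _ _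
  have h := hsub.tendsto_lim (bddBelow_range_wordLength_pow_div γ)
  rwa [Subadditive.lim] at h

theorem Commute.stableLength_mul_le (hS : Submonoid.closure (S : Set Γ) = ⊤) {a b : Γ}
    (h : Commute a b) : stableLength S (a * b) ≤ stableLength S a + stableLength S b := by
  refine le_of_tendsto_of_tendsto' (tendsto_wordLength_pow_div_stableLength hS (a * b))
    ((tendsto_wordLength_pow_div_stableLength hS a).add
      (tendsto_wordLength_pow_div_stableLength hS b)) fun n => ?_
  rw [h.mul_pow, ← add_div]
  gcongr
  exact_mod_cast wordLength_mul_le hS _ _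

end stableLength

theorem commutatorElement_pow_pow_of_mem_center {x y : Γ} (h : ⁅x, y⁆ ∈ center Γ) (a b : ℕ) :
    ⁅x ^ a, y ^ b⁆ = ⁅x, y⁆ ^ (a * b) := by
  set c := ⁅x, y⁆
  have hc : ∀ g, Commute c g := fun g => (mem_center_iff.mp h g).symm
  have conj_x_pow : x * y ^ b * x⁻¹ = c ^ b * y ^ b := by
    rw [← conj_pow, show x * y * x⁻¹ = c * y by simp only [c, commutatorElement_def]; group,
      (hc y).mul_pow]
  have conj_pow_x_pow : ∀ a : ℕ, x ^ a * y ^ b * (x ^ a)⁻¹ = c ^ (a * b) * y ^ b := by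
    intro a
    induction a with
    | zero => simp
    | succ a ih =>
      calc x ^ (a + 1) * y ^ b * (x ^ (a + 1))⁻¹ = x * (x ^ a * y ^ b * (x ^ a)⁻¹) * x⁻¹ := by
            group
        _ = c ^ (a * b) * (x * y ^ b * x⁻¹) := by
            rw [ih, ← mul_assoc x, ← ((hc x).pow_left _).eq]
            group
        _ = c ^ ((a + 1) * b) * y ^ b := by
            rw [conj_x_pow, ← mul_assoc, ← pow_add, add_one_mul]
  rw [commutatorElement_def, conj_pow_x_pow, mul_inv_cancel_right]

section generating

variable (hsym : ∀ s ∈ S, s⁻¹ ∈ S) (hS : Submonoid.closure (S : Set Γ) = ⊤)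
include hsym hS

theorem stableLength_commutatorElement_eq_zero {x y : Γ} (h : ⁅x, y⁆ ∈ center Γ) :
    stableLength S ⁅x, y⁆ = 0 := by
  set C := 2 * (wordLength S x + wordLength S y)
  have hk : ∀ k : ℕ, 0 < k → stableLength S ⁅x, y⁆ ≤ (C : ℝ) / k := by
    intro k hk
    have hlen : wordLength S ⁅x ^ k, y ^ k⁆ ≤ k * C := by
      have := wordLength_commutatorElement_le hS hsym (x ^ k) (y ^ k)
      have := wordLength_pow_le hS x k
      have := wordLength_pow_le hS y k
      simp only [C]
      linarith
    have hsq : (k : ℝ) * (k * stableLength S ⁅x, y⁆) ≤ k * C :=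
      calc (k : ℝ) * (k * stableLength S ⁅x, y⁆) = ((k * k : ℕ) : ℝ) * stableLength S ⁅x, y⁆ := by
            push_cast; ring
        _ ≤ stableLength S (⁅x, y⁆ ^ (k * k)) := mul_stableLength_le_stableLength_pow _ _
        _ ≤ wordLength S (⁅x, y⁆ ^ (k * k)) := stableLength_le_wordLength _
        _ = wordLength S ⁅x ^ k, y ^ k⁆ := by rw [commutatorElement_pow_pow_of_mem_center h]
        _ ≤ k * C := by exact_mod_cast hlen
    rw [le_div_iff₀ (by positivity), mul_comm]
    exact le_of_mul_le_mul_left hsq (by positivity)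
  refine le_antisymm (ge_of_tendsto (tendsto_const_div_atTop_nhds_zero_nat (C : ℝ)) ?_)
    (stableLength_nonneg _)
  filter_upwards [eventually_gt_atTop 0] with k using hk k

theorem stableLength_eq_zero_of_mem_commutator {H K : Subgroup Γ} (hc : ⁅H, K⁆ ≤ center Γ)
    {z : Γ} (hz : z ∈ ⁅H, K⁆) : stableLength S z = 0 := by
  rw [Subgroup.commutator_def] at hz
  induction hz using closure_induction'' with
  | mem _ hg =>
    obtain ⟨g₁, h₁, g₂, h₂, rfl⟩ := hg
    exact stableLength_commutatorElement_eq_zero hsym hS (hc (commutator_mem_commutator h₁ h₂))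
  | inv_mem _ hg =>
    obtain ⟨g₁, h₁, g₂, h₂, rfl⟩ := hg
    rw [commutatorElement_inv]
    refine stableLength_commutatorElement_eq_zero hsym hS ?_
    rw [← commutatorElement_inv]
    exact inv_mem (hc (commutator_mem_commutator h₁ h₂))
  | one => exact stableLength_one
  | mul a b ha _ iha ihb =>
    refine le_antisymm ?_ (stableLength_nonneg _)
    have hab : Commute a b := (mem_center_iff.mp (hc ha) b).symm
    linarith [hab.stableLength_mul_le hS]

end generating

section map

variable {Γ' : Type} [Group Γ'] (f : Γ →* Γ') {S' : Finset Γ'}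
  (hS' : Submonoid.closure (S' : Set Γ') = ⊤) (hS'S : (S' : Set Γ') ⊆ f '' S)
include hS' hS'S

theorem exists_map_eq_wordLength_le (g' : Γ') :
    ∃ g, f g = g' ∧ wordLength S g ≤ wordLength S' g' := by
  obtain ⟨l', hl', rfl, hlen⟩ := exists_list_prod_eq_length_eq_wordLength hS' g'
  rw [Set.image_eq_range] at hS'S
  obtain ⟨l, rfl⟩ : l' ∈ Set.range (List.map fun s : S => f s) := by
    rw [Set.range_list_map]
    exact fun x hx => hS'S (hl' x hx)
  refine ⟨(l.map (↑)).prod, by simp [map_list_prod], ?_⟩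
  rw [← hlen, List.length_map, ← List.length_map (f := ((↑) : S → Γ))]
  exact wordLength_list_prod_le (by simp +contextual)

theorem stableLength_le_stableLength_map (hS : Submonoid.closure (S : Set Γ) = ⊤)
    (hker : f.ker ≤ center Γ) (hker' : ∀ z ∈ f.ker, stableLength S z = 0) (γ : Γ) :
    stableLength S γ ≤ stableLength S' (f γ) := by
  refine le_stableLength fun m hm => ?_
  obtain ⟨w, hw, hlen⟩ := exists_map_eq_wordLength_le f hS' hS'S (f γ ^ m)
  have hz : w⁻¹ * γ ^ m ∈ f.ker := by simp [MonoidHom.mem_ker, hw]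
  rw [le_div_iff₀ (by positivity), mul_comm]
  calc m * stableLength S γ ≤ stableLength S (γ ^ m) := mul_stableLength_le_stableLength_pow γ m
    _ = stableLength S (w * (w⁻¹ * γ ^ m)) := by rw [mul_inv_cancel_left]
    _ ≤ stableLength S w + stableLength S (w⁻¹ * γ ^ m) :=
      Commute.stableLength_mul_le hS (mem_center_iff.mp (hker hz) w)
    _ = stableLength S w := by rw [hker' _ hz, add_zero]
    _ ≤ wordLength S' (f γ ^ m) := (stableLength_le_wordLength w).trans (by exact_mod_cast hlen)

end map

theorem lowerCentralSeries_le_center_of_succ_eq_bot {n : ℕ}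
    (h : (⊤ : Subgroup Γ).lowerCentralSeries (n + 1) = ⊥) :
    (⊤ : Subgroup Γ).lowerCentralSeries n ≤ center Γ := fun z hz => by
  refine mem_center_iff.mpr fun g => ?_
  have hcomm : ⁅z, g⁆ ∈ (⊤ : Subgroup Γ).lowerCentralSeries (n + 1) :=
    commutator_mem_commutator hz (mem_top g)
  rw [h, Subgroup.mem_bot, commutatorElement_eq_one_iff_commute] at hcomm
  exact hcomm.eq.symm

theorem stableLength_eq_zero_of_lowerCentralSeries_eq_bot {n : ℕ}
    (hbot : (⊤ : Subgroup Γ).lowerCentralSeries (n + 1) = ⊥) (hsym : ∀ s ∈ S, s⁻¹ ∈ S)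
    (hS : Submonoid.closure (S : Set Γ) = ⊤) {γ : Γ} (hγ : γ ∈ commutator Γ) :
    stableLength S γ = 0 := by
  induction n generalizing Γ with
  | zero =>
    rw [← top_lowerCentralSeries_one, hbot, Subgroup.mem_bot] at hγ
    rw [hγ, stableLength_one]
  | succ n ih =>
    classical
    set Z := (⊤ : Subgroup Γ).lowerCentralSeries (n + 1)
    have hZ : Z ≤ center Γ := lowerCentralSeries_le_center_of_succ_eq_bot hbot
    set π := QuotientGroup.mk' Z
    have hπ : Function.Surjective π := QuotientGroup.mk'_surjective Z
    have hmap : ∀ k, ((⊤ : Subgroup Γ).lowerCentralSeries k).map π =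
        (⊤ : Subgroup (Γ ⧸ Z)).lowerCentralSeries k := fun k => by
      rw [map_lowerCentralSeries, map_top_of_surjective π hπ]
    have hsym' : ∀ s ∈ S.image π, s⁻¹ ∈ S.image π := by
      simp only [Finset.mem_image, forall_exists_index, and_imp, forall_apply_eq_imp_iff₂]
      exact fun s hs => ⟨s⁻¹, hsym s hs, map_inv π s⟩
    have hS' : Submonoid.closure ((S.image π : Finset (Γ ⧸ Z)) : Set (Γ ⧸ Z)) = ⊤ := by
      rw [Finset.coe_image, ← MonoidHom.map_mclosure, hS, ← MonoidHom.mrange_eq_map,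
        MonoidHom.mrange_eq_top_of_surjective π hπ]
    have hbot' : (⊤ : Subgroup (Γ ⧸ Z)).lowerCentralSeries (n + 1) = ⊥ := by
      rw [← hmap, Subgroup.map_eq_bot_iff, QuotientGroup.ker_mk']
    have hγ' : π γ ∈ commutator (Γ ⧸ Z) := by
      rw [← top_lowerCentralSeries_one, ← hmap]
      exact mem_map_of_mem π hγ
    refine le_antisymm ?_ (stableLength_nonneg γ)
    calc stableLength S γ ≤ stableLength (S.image π) (π γ) :=
          stableLength_le_stableLength_map π hS' (by simp) hS (by rwa [QuotientGroup.ker_mk'])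
            (fun z hz => stableLength_eq_zero_of_mem_commutator hsym hS hZ
              (by rwa [QuotientGroup.ker_mk'] at hz)) γ
      _ = 0 := ih hbot' hsym' hS' hγ'

/-- in a finitely generated nilpotent group, every element of the commutator
subgroup is distorted. -/
theorem commutator_elements_distorted {Γ : Type} [Group Γ] [Group.IsNilpotent Γ]
    (S : Finset Γ) (hsym : ∀ s ∈ S, s⁻¹ ∈ S) (hgen : Subgroup.closure (S : Set Γ) = ⊤) :
    ∀ γ ∈ commutator Γ,
      Tendsto (fun n : ℕ => (wordLength S (γ ^ n) : ℝ) / n) atTop (𝓝 0) := by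
  intro γ hγ
  obtain ⟨n, hn⟩ := Subgroup.nilpotent_iff_lowerCentralSeries.mp ‹Group.IsNilpotent Γ›
  have hbot : (⊤ : Subgroup Γ).lowerCentralSeries (n + 1) = ⊥ :=
    eq_bot_mono (Subgroup.lowerCentralSeries_antitone _ n.le_succ) hn
  have hS : Submonoid.closure (S : Set Γ) = ⊤ := submonoidClosure_eq_top_of_inv_mem hsym hgen
  rw [← stableLength_eq_zero_of_lowerCentralSeries_eq_bot hbot hsym hS hγ]
  exact tendsto_wordLength_pow_div_stableLength hS γ
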